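/- In the prescription system for subsystem 3, for every t < T, every history (z³_{1:t}, θ_{0:t−1}), every complete action θ_t = (γ¹_t, γ²_t, u³_t) and every z³_{t+1}, the subsystem-3 information state satisfies the strategy-independent recursion P³_{t+1} = { ( f̂_t(x̂, u¹, u², u³_t, w), f̃¹_t(P¹, (u¹, u², u³_t), ĥ¹_t(x̂, u¹, u², u³_t)), f̃²_t(P², γ¹_t(·, P²), u², u³_t, ĥ²_t(x̂, u¹, u², u³_t)) ) : (x̂, P¹, P²) ∈ Q_t, w ∈ 𝒲_t, where u¹ := γ¹_t(P¹, P²) and u² := γ²_t(P²) }, with Q_t := { (x̂, P¹, P²) ∈ P³_t : ĥ³_t(x̂, γ¹_t(P¹, P²), γ²_t(P²), u³_t) = z³_{t+1} }. In particular there exists a map f̃³_t, independent of any strategy, with P³_{t+1} = f̃³_t(P³_t, θ_t, z³_{t+1}). -/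

import Mathlib

/-- The prescription system for subsystem 3. -/
structure Pres3 where
  T : ℕ
  hT : 1 ≤ T
  X : ℕ → Type
  U1 : ℕ → Type
  U2 : ℕ → Type
  U3 : ℕ → Type
  W : ℕ → Type
  Z1 : ℕ → Type
  Z2 : ℕ → Type
  Z3 : ℕ → Type
  f : ∀ t, X t → U1 t → U2 t → U3 t → W t → X (t+1)
  h1 : ∀ t, X t → U1 t → U2 t → U3 t → Z1 (t+1)
  h2 : ∀ t, X t → U1 t → U2 t → U3 t → Z2 (t+1)
  h3 : ∀ t, X t → U1 t → U2 t → U3 t → Z3 (t+1)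
  ftil1 : ∀ t, Set (X t) → (U1 t × U2 t × U3 t) → Z1 (t+1) → Set (X (t+1))
  ftil2 : ∀ t, Set (X t × Set (X t)) → (Set (X t) → U1 t) → U2 t → U3 t →
    Z2 (t+1) → Set (X (t+1) × Set (X (t+1)))
  X0 : Set (X 0)
  X0ne : X0.Nonempty
  Xfin : ∀ t, Finite (X t)
  Xne : ∀ t, Nonempty (X t)
  U1fin : ∀ t, Finite (U1 t)
  U1ne : ∀ t, Nonempty (U1 t)
  U2fin : ∀ t, Finite (U2 t)
  U2ne : ∀ t, Nonempty (U2 t)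
  U3fin : ∀ t, Finite (U3 t)
  U3ne : ∀ t, Nonempty (U3 t)
  Wfin : ∀ t, Finite (W t)
  Wne : ∀ t, Nonempty (W t)
  Z1fin : ∀ t, Finite (Z1 t)
  Z1ne : ∀ t, Nonempty (Z1 t)
  Z2fin : ∀ t, Finite (Z2 t)
  Z2ne : ∀ t, Nonempty (Z2 t)
  Z3fin : ∀ t, Finite (Z3 t)
  Z3ne : ∀ t, Nonempty (Z3 t)

namespace Pres3

variable (S : Pres3)

/-- A complete action of subsystem 3 at time `t`:
`θ_t = (γ¹_t, γ²_t, u³_t)`. -/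
def Theta (t : ℕ) :=
  (Set (S.X t) → Set (S.X t × Set (S.X t)) → S.U1 t) ×
  (Set (S.X t × Set (S.X t)) → S.U2 t) × S.U3 t

/-- The initial subsystem-2 information state `P²_0 = {(x̂, X̂₀) : x̂ ∈ X̂₀}`. -/
def P20 : Set (S.X 0 × Set (S.X 0)) := {q | q.1 ∈ S.X0 ∧ q.2 = S.X0}

/-- Open-loop triple trajectory `(x̂_t, P¹_t, P²_t)` generated by a sequence of
complete actions `θ`. -/
def ol3 (θ : ∀ s, S.Theta s) (x0 : S.X 0) (w : ∀ s, S.W s) :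
    ∀ t : ℕ, S.X t × Set (S.X t) × Set (S.X t × Set (S.X t))
  | 0 => (x0, S.X0, S.P20)
  | t+1 =>
    let p := ol3 θ x0 w t
    let u1 := (θ t).1 p.2.1 p.2.2
    let u2 := (θ t).2.1 p.2.2
    let u3 := (θ t).2.2
    (S.f t p.1 u1 u2 u3 (w t),
     S.ftil1 t p.2.1 (u1, u2, u3) (S.h1 t p.1 u1 u2 u3),
     S.ftil2 t p.2.2 (fun P => (θ t).1 P p.2.2) u2 u3 (S.h2 t p.1 u1 u2 u3))

/-- The realized `z³`-observation generated at time `t+1` along the open loop. -/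
def obs3 (θ : ∀ s, S.Theta s) (x0 : S.X 0) (w : ∀ s, S.W s) (t : ℕ) : S.Z3 (t+1) :=
  let p := S.ol3 θ x0 w t
  S.h3 t p.1 ((θ t).1 p.2.1 p.2.2) ((θ t).2.1 p.2.2) (θ t).2.2

/-- The subsystem-3 information state `P³_t(z³_{1:t}, θ_{0:t-1})`. -/
def P3 (t : ℕ) (z : ∀ ℓ : Fin t, S.Z3 (ℓ.1+1)) (θ : ∀ ℓ : Fin t, S.Theta ℓ.1) :
    Set (S.X t × Set (S.X t) × Set (S.X t × Set (S.X t))) :=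
  {q | ∃ θf : ∀ s, S.Theta s, (∀ ℓ : Fin t, θf ℓ.1 = θ ℓ) ∧
    ∃ x0 ∈ S.X0, ∃ w : ∀ s, S.W s,
      (∀ ℓ : Fin t, S.obs3 θf x0 w ℓ.1 = z ℓ) ∧ S.ol3 θf x0 w t = q}

lemma ol3_congr (θ θ' : ∀ s, S.Theta s) (x0 : S.X 0) (w w' : ∀ s, S.W s) :
    ∀ t : ℕ, (∀ s < t, θ s = θ' s) → (∀ s < t, w s = w' s) →
      S.ol3 θ x0 w t = S.ol3 θ' x0 w' t := by
  intro t
  induction t with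
  | zero => intro _ _; rfl
  | succ t ih =>
    intro hθ hw
    simp only [ol3]
    rw [ih (fun s hs => hθ s (hs.trans (Nat.lt_succ_self t)))
        (fun s hs => hw s (hs.trans (Nat.lt_succ_self t))),
      hθ t (Nat.lt_succ_self t), hw t (Nat.lt_succ_self t)]

lemma obs3_congr (θ θ' : ∀ s, S.Theta s) (x0 : S.X 0) (w w' : ∀ s, S.W s)
    (t : ℕ) (hθ : ∀ s ≤ t, θ s = θ' s) (hw : ∀ s < t, w s = w' s) :
    S.obs3 θ x0 w t = S.obs3 θ' x0 w' t := by
  simp only [obs3]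
  rw [S.ol3_congr θ θ' x0 w w' t (fun s hs => hθ s hs.le) hw, hθ t le_rfl]

lemma key (t : ℕ) (z : ∀ ℓ : Fin t, S.Z3 (ℓ.1+1)) (θ : ∀ ℓ : Fin t, S.Theta ℓ.1)
    (γ1 : Set (S.X t) → Set (S.X t × Set (S.X t)) → S.U1 t)
    (γ2 : Set (S.X t × Set (S.X t)) → S.U2 t) (u3t : S.U3 t)
    (znext : S.Z3 (t+1)) :
    S.P3 (t+1)
        (Fin.snoc (α := fun ℓ : Fin (t+1) => S.Z3 (ℓ.1+1)) z znext)
        (Fin.snoc (α := fun ℓ : Fin (t+1) => S.Theta ℓ.1) θ (γ1, γ2, u3t)) =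
      {q' | ∃ p ∈ {p ∈ S.P3 t z θ |
              S.h3 t p.1 (γ1 p.2.1 p.2.2) (γ2 p.2.2) u3t = znext},
        ∃ w : S.W t,
          q' = (S.f t p.1 (γ1 p.2.1 p.2.2) (γ2 p.2.2) u3t w,
                S.ftil1 t p.2.1 (γ1 p.2.1 p.2.2, γ2 p.2.2, u3t)
                  (S.h1 t p.1 (γ1 p.2.1 p.2.2) (γ2 p.2.2) u3t),
                S.ftil2 t p.2.2 (fun P => γ1 P p.2.2) (γ2 p.2.2) u3t
                  (S.h2 t p.1 (γ1 p.2.1 p.2.2) (γ2 p.2.2) u3t))} := by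
  ext q'
  constructor
  · rintro ⟨θf, hθf, x0, hx0, w, hz, hol⟩
    have hθt : θf t = (γ1, γ2, u3t) := by
      have h := hθf (Fin.last t)
      erw [Fin.snoc_last] at h
      exact h
    have hlast : S.obs3 θf x0 w t = znext := by
      have h := hz (Fin.last t)
      rwa [Fin.snoc_last] at h
    refine ⟨S.ol3 θf x0 w t,
      ⟨⟨θf, fun ℓ => ?_, x0, hx0, w, fun ℓ => ?_, rfl⟩, ?_⟩, w t, ?_⟩
    · have h := hθf ℓ.castSucc
      erw [Fin.snoc_castSucc] at h
      exact h
    · have h := hz ℓ.castSucc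
      rwa [Fin.snoc_castSucc] at h
    · simp only [obs3, hθt] at hlast
      exact hlast
    · rw [← hol]
      simp only [ol3, hθt]
  · rintro ⟨p, ⟨⟨θf', hθf', x0, hx0, w', hz', hol'⟩, hobs⟩, w0, hq⟩
    classical
    set θf : ∀ s, S.Theta s := Function.update θf' t ((γ1, γ2, u3t) : S.Theta t)
      with hθfdef
    set wf : ∀ s, S.W s := Function.update w' t w0 with hwfdef
    have hθne : ∀ s, s ≠ t → θf s = θf' s := fun s hs =>
      Function.update_of_ne hs _ _
    have hwne : ∀ s, s ≠ t → wf s = w' s := fun s hs =>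
      Function.update_of_ne hs _ _
    have hθeq : θf t = (γ1, γ2, u3t) := Function.update_self _ _ _
    have hweq : wf t = w0 := Function.update_self _ _ _
    have holp : S.ol3 θf x0 wf t = p := by
      rw [S.ol3_congr θf θf' x0 wf w' t
        (fun s hs => hθne s (Nat.ne_of_lt hs))
        (fun s hs => hwne s (Nat.ne_of_lt hs))]
      exact hol'
    refine ⟨θf, fun ℓ => ?_, x0, hx0, wf, fun ℓ => ?_, ?_⟩
    · rcases Nat.lt_succ_iff_lt_or_eq.mp ℓ.isLt with h | h
      · have hℓ : ℓ = Fin.castSucc ⟨ℓ.1, h⟩ := Fin.ext rfl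
        rw [hℓ]
        erw [Fin.snoc_castSucc]
        exact (hθne _ (Nat.ne_of_lt h)).trans (hθf' ⟨ℓ.1, h⟩)
      · have hℓ : ℓ = Fin.last t := Fin.ext h
        rw [hℓ]
        erw [Fin.snoc_last]
        exact hθeq
    · rcases Nat.lt_succ_iff_lt_or_eq.mp ℓ.isLt with h | h
      · have hℓ : ℓ = Fin.castSucc ⟨ℓ.1, h⟩ := Fin.ext rfl
        rw [hℓ, Fin.snoc_castSucc]
        exact (S.obs3_congr θf θf' x0 wf w' ℓ.1
          (fun s hs => hθne s (Nat.ne_of_lt (lt_of_le_of_lt hs h)))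
          (fun s hs => hwne s (Nat.ne_of_lt (hs.trans h)))).trans (hz' ⟨ℓ.1, h⟩)
      · have hℓ : ℓ = Fin.last t := Fin.ext h
        rw [hℓ, Fin.snoc_last]
        show S.obs3 θf x0 wf t = znext
        simp only [obs3, hθeq, holp]
        exact hobs
    · rw [hq]
      simp only [ol3, hθeq, hweq, holp]

end Pres3

/-- the subsystem-3 information state satisfies a
strategy-independent recursion. -/
theorem stmt9 (S : Pres3) : ∀ t : ℕ, t < S.T →
    (∀ (z : ∀ ℓ : Fin t, S.Z3 (ℓ.1+1)) (θ : ∀ ℓ : Fin t, S.Theta ℓ.1)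
       (γ1 : Set (S.X t) → Set (S.X t × Set (S.X t)) → S.U1 t)
       (γ2 : Set (S.X t × Set (S.X t)) → S.U2 t) (u3t : S.U3 t)
       (znext : S.Z3 (t+1)),
      S.P3 (t+1)
          (Fin.snoc (α := fun ℓ : Fin (t+1) => S.Z3 (ℓ.1+1)) z znext)
          (Fin.snoc (α := fun ℓ : Fin (t+1) => S.Theta ℓ.1) θ (γ1, γ2, u3t)) =
        {q' | ∃ p ∈ {p ∈ S.P3 t z θ |
                S.h3 t p.1 (γ1 p.2.1 p.2.2) (γ2 p.2.2) u3t = znext},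
          ∃ w : S.W t,
            q' = (S.f t p.1 (γ1 p.2.1 p.2.2) (γ2 p.2.2) u3t w,
                  S.ftil1 t p.2.1 (γ1 p.2.1 p.2.2, γ2 p.2.2, u3t)
                    (S.h1 t p.1 (γ1 p.2.1 p.2.2) (γ2 p.2.2) u3t),
                  S.ftil2 t p.2.2 (fun P => γ1 P p.2.2) (γ2 p.2.2) u3t
                    (S.h2 t p.1 (γ1 p.2.1 p.2.2) (γ2 p.2.2) u3t))}) ∧
    ∃ F : Set (S.X t × Set (S.X t) × Set (S.X t × Set (S.X t))) → S.Theta t →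
        S.Z3 (t+1) → Set (S.X (t+1) × Set (S.X (t+1)) × Set (S.X (t+1) × Set (S.X (t+1)))),
      ∀ (z : ∀ ℓ : Fin t, S.Z3 (ℓ.1+1)) (θ : ∀ ℓ : Fin t, S.Theta ℓ.1)
        (θt : S.Theta t) (znext : S.Z3 (t+1)),
        S.P3 (t+1)
            (Fin.snoc (α := fun ℓ : Fin (t+1) => S.Z3 (ℓ.1+1)) z znext)
            (Fin.snoc (α := fun ℓ : Fin (t+1) => S.Theta ℓ.1) θ θt) =
          F (S.P3 t z θ) θt znext := by
  intro t _
  refine ⟨fun z θ γ1 γ2 u3t znext => S.key t z θ γ1 γ2 u3t znext,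
    ⟨fun Q θt z' =>
      {q' | ∃ p ∈ {p ∈ Q | S.h3 t p.1 (θt.1 p.2.1 p.2.2) (θt.2.1 p.2.2) θt.2.2 = z'},
        ∃ w : S.W t,
          q' = (S.f t p.1 (θt.1 p.2.1 p.2.2) (θt.2.1 p.2.2) θt.2.2 w,
                S.ftil1 t p.2.1 (θt.1 p.2.1 p.2.2, θt.2.1 p.2.2, θt.2.2)
                  (S.h1 t p.1 (θt.1 p.2.1 p.2.2) (θt.2.1 p.2.2) θt.2.2),
                S.ftil2 t p.2.2 (fun P => θt.1 P p.2.2) (θt.2.1 p.2.2) θt.2.2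
                  (S.h2 t p.1 (θt.1 p.2.1 p.2.2) (θt.2.1 p.2.2) θt.2.2))},
      fun z θ θt znext => ?_⟩⟩
  obtain ⟨γ1, γ2, u3t⟩ := θt
  exact S.key t z θ γ1 γ2 u3t znext
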